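/- For saturated first-order Kripke models, bisimilarity coincides with logical equivalence: if M and N are saturated first-order Kripke models, w a world of M and v a world of N, then M,w and N,v are bisimilar if and only if they satisfy exactly the same sentences of L. -/

import Mathlib

/-!
One direction is the usual invariance of truth under bisimulation, by induction on formulas. For
the other, logical equivalence itself is a bisimulation. Atomic harmony is read off the sentences
`⟨x:=a⟩⊤` and `⟨x:=a⟩p_x`. For the zig condition, a coalition `A` is finite, so distinct variables
can name its members and `¬[x⃗:=a⃗] K_{x⃗} ¬β` expresses that `β` holds somewhere in
`⋂_{a ∈ A} R_a(w)`; this transfers finite satisfiability of the theory of a successor from `w` to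
`v`, and saturation finishes the argument.
-/

namespace SimplicialEpistemic

/-! ## Syntax -/

inductive Formula (Ag Xv Pr : Type) : Type
  | atom : Pr → Xv → Formula Ag Xv Pr
  | top : Formula Ag Xv Pr
  | neg : Formula Ag Xv Pr → Formula Ag Xv Pr
  | and : Formula Ag Xv Pr → Formula Ag Xv Pr → Formula Ag Xv Pr
  | assign : Xv → Ag → Formula Ag Xv Pr → Formula Ag Xv Pr
  | know : Finset Xv → Formula Ag Xv Pr → Formula Ag Xv Pr

namespace Formula

variable {Ag Xv Pr : Type} [DecidableEq Xv]

/-- Free variables of a formula. -/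
def FV : Formula Ag Xv Pr → Finset Xv
  | .atom _ x => {x}
  | .top => ∅
  | .neg φ => FV φ
  | .and φ ψ => FV φ ∪ FV ψ
  | .assign x _ φ => FV φ \ {x}
  | .know Xs _ => Xs

/-- Well-formedness: in `K_X α`, the formula `α` must have no free variables.
The language `L` consists of the well-formed formulas. -/
def Wf : Formula Ag Xv Pr → Prop
  | .atom _ _ => True
  | .top => True
  | .neg φ => Wf φ
  | .and φ ψ => Wf φ ∧ Wf ψ
  | .assign _ _ φ => Wf φ
  | .know _ α => Wf α ∧ FV α = ∅

/-- A sentence is a well-formed formula with no free variables. -/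
def Sent (φ : Formula Ag Xv Pr) : Prop := Wf φ ∧ FV φ = ∅

/-- Implication `φ → ψ`, defined as `¬(φ ∧ ¬ψ)`. -/
def impl (φ ψ : Formula Ag Xv Pr) : Formula Ag Xv Pr := .neg (.and φ (.neg ψ))

/-- Biconditional `φ ↔ ψ`. -/
def fiff (φ ψ : Formula Ag Xv Pr) : Formula Ag Xv Pr := .and (impl φ ψ) (impl ψ φ)

/-- Disjunction `φ ∨ ψ`, defined as `¬(¬φ ∧ ¬ψ)`. -/
def fdisj (φ ψ : Formula Ag Xv Pr) : Formula Ag Xv Pr := .neg (.and (.neg φ) (.neg ψ))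

/-- Falsum `⊥ := ¬⊤`. -/
def fbot : Formula Ag Xv Pr := .neg .top

/-- The dual assignment operator `⟨x:=a⟩φ := ¬[x:=a]¬φ`. -/
def dia (x : Xv) (a : Ag) (φ : Formula Ag Xv Pr) : Formula Ag Xv Pr :=
  .neg (.assign x a (.neg φ))

/-- Finite conjunction of a list of formulas. -/
def bigAnd : List (Formula Ag Xv Pr) → Formula Ag Xv Pr
  | [] => .top
  | φ :: l => .and φ (bigAnd l)

/-- Iterated assignment `[x⃗:=a⃗]φ`. -/
def assigns : List Xv → List Ag → Formula Ag Xv Pr → Formula Ag Xv Pr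
  | x :: xs, a :: as, φ => .assign x a (assigns xs as φ)
  | _, _, φ => φ

/-- Substitution `φ[y/x]` of `y` for all free occurrences of `x` in `φ`. -/
def subst (x y : Xv) : Formula Ag Xv Pr → Formula Ag Xv Pr
  | .atom p z => .atom p (if z = x then y else z)
  | .top => .top
  | .neg φ => .neg (subst x y φ)
  | .and φ ψ => .and (subst x y φ) (subst x y ψ)
  | .assign z a φ => if z = x then .assign z a φ else .assign z a (subst x y φ)
  | .know Xs α => .know (Xs.image fun z => if z = x then y else z) α

/-- Admissibility of `φ[y/x]`: `x` has no free occurrence in `φ` within the scope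
of `[y:=b]` for any `b`. -/
def Adm (x y : Xv) : Formula Ag Xv Pr → Prop
  | .atom _ _ => True
  | .top => True
  | .neg φ => Adm x y φ
  | .and φ ψ => Adm x y φ ∧ Adm x y ψ
  | .assign z _ φ => z = x ∨ x ∉ FV φ ∨ (z ≠ y ∧ Adm x y φ)
  | .know _ _ => True

/-- `occurs y φ`: the variable `y` occurs (free or bound) in `φ`. -/
def occurs (y : Xv) : Formula Ag Xv Pr → Prop
  | .atom _ z => z = y
  | .top => False
  | .neg φ => occurs y φ
  | .and φ ψ => occurs y φ ∨ occurs y ψ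
  | .assign z _ φ => z = y ∨ occurs y φ
  | .know Xs α => y ∈ Xs ∨ occurs y α

/-- Propositional evaluation, treating atoms, assignment formulas and knowledge
formulas as propositional atoms. -/
def propEval (v : Formula Ag Xv Pr → Bool) : Formula Ag Xv Pr → Bool
  | .atom p x => v (.atom p x)
  | .top => true
  | .neg φ => !(propEval v φ)
  | .and φ ψ => propEval v φ && propEval v ψ
  | .assign x a φ => v (.assign x a φ)
  | .know Xs α => v (.know Xs α)

/-- `φ` is a propositional tautology. -/
def Tautology (φ : Formula Ag Xv Pr) : Prop := ∀ v, propEval v φ = true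

end Formula

/-! ## Simplicial models and their semantics -/

structure SimpModel (Ag Pr : Type) : Type 1 where
  V : Type
  faces : Set (Set V)
  χ : V → Ag
  ℓ : Pr → Set V

namespace SimpModel

variable {Ag Pr : Type}

/-- The facets: faces contained in no other face. -/
def facets (C : SimpModel Ag Pr) : Set (Set C.V) :=
  {F | F ∈ C.faces ∧ ∀ G ∈ C.faces, F ⊆ G → F = G}

/-- The conditions for being a genuine simplicial model. -/
def IsModel (C : SimpModel Ag Pr) : Prop :=
  Nonempty C.V ∧ (∅ : Set C.V) ∉ C.faces ∧
    (∀ Y F : Set C.V, Y.Nonempty → Y ⊆ F → F ∈ C.faces → Y ∈ C.faces) ∧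
    (∀ v : C.V, {v} ∈ C.faces) ∧
    (∀ F ∈ C.faces, Set.InjOn C.χ F)

end SimpModel

/-! ## First-order Kripke models and their semantics -/

structure KModel (Ag Pr : Type) : Type 1 where
  W : Type
  δ : W → Set Ag
  R : Ag → W → W → Prop
  ρ : Pr → W → Set Ag

namespace KModel

variable {Ag Pr : Type}

/-- The conditions for being a genuine first-order Kripke model. -/
def IsModel (M : KModel Ag Pr) : Prop :=
  Nonempty M.W ∧ (∀ w : M.W, (M.δ w).Nonempty) ∧
    (∀ (a : Ag) (w v : M.W), M.R a w v → a ∈ M.δ w) ∧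
    (∀ (p : Pr) (w : M.W), M.ρ p w ⊆ M.δ w)

end KModel

variable {Ag Xv Pr : Type}

/-- Simplicial satisfaction `C, F, σ ⊩ φ`. -/
def SSat [DecidableEq Xv] (C : SimpModel Ag Pr) :
    Formula Ag Xv Pr → Set C.V → (Xv → Ag) → Prop
  | .atom p x, F, σ => σ x ∈ C.χ '' (F ∩ C.ℓ p)
  | .top, _, _ => True
  | .neg φ, F, σ => ¬ SSat C φ F σ
  | .and φ ψ, F, σ => SSat C φ F σ ∧ SSat C ψ F σ
  | .assign x a φ, F, σ => a ∈ C.χ '' F → SSat C φ F (Function.update σ x a)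
  | .know Xs α, F, σ =>
      ∀ G ∈ C.facets, (∀ x ∈ Xs, σ x ∈ C.χ '' (F ∩ G)) → SSat C α G σ

/-- Kripke satisfaction `M, w, σ ⊨ φ`. -/
def KSat [DecidableEq Xv] (M : KModel Ag Pr) :
    Formula Ag Xv Pr → M.W → (Xv → Ag) → Prop
  | .atom p x, w, σ => σ x ∈ M.ρ p w
  | .top, _, _ => True
  | .neg φ, w, σ => ¬ KSat M φ w σ
  | .and φ ψ, w, σ => KSat M φ w σ ∧ KSat M ψ w σ
  | .assign x a φ, w, σ => a ∈ M.δ w → KSat M φ w (Function.update σ x a)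
  | .know Xs α, w, σ => ∀ v : M.W, (∀ x ∈ Xs, M.R (σ x) w v) → KSat M α v σ

/-! ## Bisimulations -/

/-- Bisimulation between simplicial models. -/
def IsSBisim (C D : SimpModel Ag Pr) (Z : Set (Set C.V × Set D.V)) : Prop :=
  (∀ q ∈ Z, q.1 ∈ C.facets ∧ q.2 ∈ D.facets) ∧
    ∀ F G, (F, G) ∈ Z →
      (C.χ '' F = D.χ '' G ∧ ∀ p : Pr, C.χ '' (F ∩ C.ℓ p) = D.χ '' (G ∩ D.ℓ p)) ∧
      (∀ (As : Set Ag) (F' : Set C.V), F' ∈ C.facets → As ⊆ C.χ '' (F ∩ F') →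
        ∃ G' ∈ D.facets, As ⊆ D.χ '' (G ∩ G') ∧ (F', G') ∈ Z) ∧
      (∀ (As : Set Ag) (G' : Set D.V), G' ∈ D.facets → As ⊆ D.χ '' (G ∩ G') →
        ∃ F' ∈ C.facets, As ⊆ C.χ '' (F ∩ F') ∧ (F', G') ∈ Z)

/-- Bisimulation between first-order Kripke models. -/
def IsKBisim (M N : KModel Ag Pr) (Z : Set (M.W × N.W)) : Prop :=
  ∀ w v, (w, v) ∈ Z →
    (M.δ w = N.δ v ∧ ∀ p : Pr, M.ρ p w = N.ρ p v) ∧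
    (∀ (As : Set Ag) (w' : M.W), (∀ a ∈ As, M.R a w w') →
      ∃ v' : N.W, (∀ a ∈ As, N.R a v v') ∧ (w', v') ∈ Z) ∧
    (∀ (As : Set Ag) (v' : N.W), (∀ a ∈ As, N.R a v v') →
      ∃ w' : M.W, (∀ a ∈ As, M.R a w w') ∧ (w', v') ∈ Z)

/-! ## Local epistemic models -/

/-- (Local S5): the restriction of `R_a` to `{w | a ∈ δ(w)}` is an equivalence relation. -/
def LocalS5 (M : KModel Ag Pr) : Prop :=
  ∀ a : Ag, Equivalence (fun w v : {w : M.W // a ∈ M.δ w} => M.R a w.1 v.1)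

/-- (Individually Increasing Domain). -/
def IndInc (M : KModel Ag Pr) : Prop :=
  ∀ (a : Ag) (w v : M.W), a ∈ M.δ w → M.R a w v → a ∈ M.δ v

/-- (Local Predicates). -/
def LocalPred (M : KModel Ag Pr) : Prop :=
  ∀ (p : Pr) (a : Ag) (w v : M.W), a ∈ M.ρ p w → M.R a w v → a ∈ M.ρ p v

/-- (Collectively Decreasing Domain). -/
def CollDec (M : KModel Ag Pr) : Prop :=
  ∀ w v : M.W, (∀ a ∈ M.δ w, M.R a w v) → M.δ v ⊆ M.δ w

/-- A local epistemic model. -/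
def IsLEM (M : KModel Ag Pr) : Prop :=
  LocalS5 M ∧ IndInc M ∧ LocalPred M ∧ CollDec M

/-- (Properness): `⋂_{a ∈ δ(w)} R_a(w) = {w}` for every `w`. -/
def Proper (M : KModel Ag Pr) : Prop :=
  ∀ w : M.W, {v : M.W | ∀ a ∈ M.δ w, M.R a w v} = {w}

/-! ## Properization -/

/-- `[w]_δ = ⋂_{a ∈ δ(w)} R_a(w)`. -/
def cell (M : KModel Ag Pr) (w : M.W) : Set M.W := {v | ∀ a ∈ M.δ w, M.R a w v}

/-- The properization `M^pr` of a Kripke model. -/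
noncomputable def properize (M : KModel Ag Pr) : KModel Ag Pr where
  W := {S : Set M.W // ∃ w : M.W, S = cell M w}
  δ := fun S => M.δ S.2.choose
  R := fun a S T => ∃ w v : M.W, S.1 = cell M w ∧ T.1 = cell M v ∧ M.R a w v
  ρ := fun p S => M.ρ p S.2.choose

/-! ## The maps LEM and SC -/

/-- `LEM(C)`: the first-order Kripke model associated to a simplicial model. -/
def LEMof (C : SimpModel Ag Pr) : KModel Ag Pr where
  W := {F : Set C.V // F ∈ C.facets}
  δ := fun F => C.χ '' F.1
  R := fun a F G => a ∈ C.χ '' (F.1 ∩ G.1)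
  ρ := fun p F => C.χ '' (F.1 ∩ C.ℓ p)

/-- Vertices of `SC(M)`: pairs `(a, [w]_a)` with `a ∈ δ(w)`, `[w]_a = R_a(w)`. -/
abbrev SCVert (M : KModel Ag Pr) : Type :=
  {u : Ag × Set M.W // ∃ w : M.W, u.1 ∈ M.δ w ∧ u.2 = {v : M.W | M.R u.1 w v}}

/-- `F^M_w = {(a, [w]_a) | a ∈ δ(w)}`. -/
def SCface (M : KModel Ag Pr) (w : M.W) : Set (SCVert M) :=
  {u | u.1.1 ∈ M.δ w ∧ u.1.2 = {v : M.W | M.R u.1.1 w v}}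

/-- `SC(M)`: the simplicial model associated to a Kripke model. -/
def SCof (M : KModel Ag Pr) : SimpModel Ag Pr where
  V := SCVert M
  faces := {F : Set (SCVert M) | F.Nonempty ∧ ∃ w : M.W, F ⊆ SCface M w}
  χ := fun u => u.1.1
  ℓ := fun p => {u | ∃ w : M.W, u.1.1 ∈ M.ρ p w ∧ u.1.2 = {v : M.W | M.R u.1.1 w v}}

/-! ## Isomorphisms -/

/-- Isomorphism of first-order Kripke models. -/
structure KIso (M N : KModel Ag Pr) where
  toEquiv : M.W ≃ N.W
  δ_eq : ∀ w : M.W, N.δ (toEquiv w) = M.δ w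
  R_iff : ∀ (a : Ag) (w v : M.W), N.R a (toEquiv w) (toEquiv v) ↔ M.R a w v
  ρ_eq : ∀ (p : Pr) (w : M.W), N.ρ p (toEquiv w) = M.ρ p w

/-- Isomorphism of simplicial models. -/
structure SIso (C D : SimpModel Ag Pr) where
  toEquiv : C.V ≃ D.V
  face_iff : ∀ F : Set C.V, F ∈ C.faces ↔ (toEquiv '' F) ∈ D.faces
  χ_eq : ∀ v : C.V, D.χ (toEquiv v) = C.χ v
  ℓ_iff : ∀ (p : Pr) (v : C.V), toEquiv v ∈ D.ℓ p ↔ v ∈ C.ℓ p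

/-! ## The proof system LEL -/

/-- The axiom system `LEL` (over the well-formed fragment of the language). -/
inductive LEL [DecidableEq Xv] : Formula Ag Xv Pr → Prop
  | taut {φ} : Formula.Wf φ → Formula.Tautology φ → LEL φ
  | kk {Xs : Finset Xv} {α β} : Formula.Sent α → Formula.Sent β →
      LEL (Formula.impl (.know Xs (Formula.impl α β))
        (Formula.impl (.know Xs α) (.know Xs β)))
  | mono {Xs Ys : Finset Xv} {α} : Xs ⊆ Ys → Formula.Sent α →
      LEL (Formula.impl (.know Xs α) (.know Ys α))
  | kasgn {x : Xv} {a : Ag} {φ ψ} : Formula.Wf φ → Formula.Wf ψ →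
      LEL (Formula.impl (.assign x a (Formula.impl φ ψ))
        (Formula.impl (.assign x a φ) (.assign x a ψ)))
  | det {x : Xv} {a : Ag} {φ} : Formula.Wf φ →
      LEL (Formula.impl (Formula.dia x a φ) (.assign x a φ))
  | tr {x : Xv} {a : Ag} {φ} : Formula.Wf φ → x ∉ Formula.FV φ →
      LEL (Formula.impl φ (.assign x a φ))
  | sub {x y : Xv} {a : Ag} {φ} : Formula.Wf φ → Formula.Adm x y φ →
      LEL (.assign y a (Formula.impl (.assign x a φ) (Formula.subst x y φ)))
  | com {x y : Xv} {a b : Ag} {φ} : Formula.Wf φ → x ≠ y →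
      LEL (Formula.impl (.assign x a (.assign y b φ)) (.assign y b (.assign x a φ)))
  | ui {x : Xv} {φ} (l : List Ag) : Formula.Wf φ → l.Nodup → (∀ a : Ag, a ∈ l) →
      LEL (Formula.impl (Formula.bigAnd (l.map fun a => .assign x a φ)) φ)
  | tK {Xs : Finset Xv} {α} : Formula.Sent α → LEL (Formula.impl (.know Xs α) α)
  | kni {xs : List Xv} {as : List Ag} {α} :
      Formula.Sent α → xs.Nodup → xs.length = as.length →
      LEL (Formula.assigns xs as (Formula.impl (.neg (.know xs.toFinset α))
        (.know xs.toFinset (Formula.assigns xs as (.neg (.know xs.toFinset α))))))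
  | epi {x : Xv} {a : Ag} : LEL (.assign x a (.know {x} (Formula.dia x a .top)))
  | api {x : Xv} {a : Ag} {p : Pr} :
      LEL (.assign x a (Formula.impl (.atom p x) (.know {x} (.assign x a (.atom p x)))))
  | eni {xs : List Xv} {as : List Ag} {z : Xv} (l : List Ag) :
      xs.Nodup → xs.length = as.length → l.Nodup → (∀ b : Ag, b ∈ l ↔ b ∉ as) →
      LEL (Formula.assigns xs as
        (Formula.impl (Formula.bigAnd (l.map fun b => .assign z b Formula.fbot))
          (.know xs.toFinset (Formula.bigAnd (l.map fun b => .assign z b Formula.fbot)))))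
  | mp {φ ψ} : LEL (Formula.impl φ ψ) → LEL φ → LEL ψ
  | necK {α} : Formula.Sent α → LEL α → LEL (.know ∅ α)
  | necA {x : Xv} {a : Ag} {φ} : LEL φ → LEL (.assign x a φ)

/-- `Γ` is consistent in `LEL`: no finite subset has a provably false conjunction. -/
def Consistent [DecidableEq Xv] (Γ : Set (Formula Ag Xv Pr)) : Prop :=
  ¬ ∃ l : List (Formula Ag Xv Pr), (∀ φ ∈ l, φ ∈ Γ) ∧ LEL (.neg (Formula.bigAnd l))

end SimplicialEpistemic

namespace SimplicialEpistemic

/-- A saturated first-order Kripke model. -/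
def KSaturated (Xv : Type) [DecidableEq Xv] {Ag Pr : Type} (M : KModel Ag Pr) : Prop :=
  ∀ (As : Set Ag) (w : M.W),
    ∀ Δ : Set (Formula Ag Xv Pr), (∀ α ∈ Δ, Formula.Sent α) →
      (∀ Δ₀ ⊆ Δ, Δ₀.Finite →
          ∃ v : M.W, (∀ a ∈ As, M.R a w v) ∧ ∀ α ∈ Δ₀, ∀ σ : Xv → Ag, KSat M α v σ) →
      ∃ v : M.W, (∀ a ∈ As, M.R a w v) ∧ ∀ α ∈ Δ, ∀ σ : Xv → Ag, KSat M α v σ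

section HennessyMilner

open Formula

variable {Ag Xv Pr : Type} [DecidableEq Xv]

theorem ksat_congr (M : KModel Ag Pr) {φ : Formula Ag Xv Pr} (hφ : φ.Wf) {w : M.W}
    {σ τ : Xv → Ag} (h : ∀ x ∈ φ.FV, σ x = τ x) : KSat M φ w σ ↔ KSat M φ w τ := by
  induction φ generalizing w σ τ with
  | atom p x => simp only [KSat, h x (Finset.mem_singleton_self x)]
  | top => exact Iff.rfl
  | neg φ ih => exact not_congr (ih hφ h)
  | and φ ψ ih₁ ih₂ =>
    exact and_congr (ih₁ hφ.1 fun x hx => h x (Finset.mem_union_left _ hx))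
      (ih₂ hφ.2 fun x hx => h x (Finset.mem_union_right _ hx))
  | assign x a φ ih =>
    refine imp_congr Iff.rfl (ih hφ fun y hy => ?_)
    by_cases hyx : y = x
    · simp [hyx]
    · simp only [Function.update_of_ne hyx]
      exact h y (Finset.mem_sdiff.2 ⟨hy, by simpa using hyx⟩)
  | know Xs α ih =>
    have hXs : ∀ x ∈ Xs, σ x = τ x := h
    refine forall_congr' fun u => imp_congr ?_ (ih hφ.1 (by simp [hφ.2]))
    exact forall₂_congr fun x hx => by rw [hXs x hx]

theorem Formula.Sent.ksat_iff {α : Formula Ag Xv Pr} (hα : α.Sent) (M : KModel Ag Pr)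
    (w : M.W) (σ τ : Xv → Ag) : KSat M α w σ ↔ KSat M α w τ :=
  ksat_congr M hα.1 (by simp [hα.2])

theorem Formula.Sent.forall_ksat_iff {α : Formula Ag Xv Pr} (hα : α.Sent) (M : KModel Ag Pr)
    (w : M.W) (σ : Xv → Ag) : (∀ τ, KSat M α w τ) ↔ KSat M α w σ :=
  ⟨fun h => h σ, fun h τ => (hα.ksat_iff M w σ τ).1 h⟩

theorem ksat_iff_of_isKBisim {M N : KModel Ag Pr} {Z : Set (M.W × N.W)} (hZ : IsKBisim M N Z)
    (φ : Formula Ag Xv Pr) {w : M.W} {v : N.W} (hwv : (w, v) ∈ Z) (σ : Xv → Ag) :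
    KSat M φ w σ ↔ KSat N φ v σ := by
  induction φ generalizing w v σ with
  | atom p x => simp only [KSat, (hZ w v hwv).1.2 p]
  | top => exact Iff.rfl
  | neg φ ih => exact not_congr (ih hwv σ)
  | and φ ψ ih₁ ih₂ => exact and_congr (ih₁ hwv σ) (ih₂ hwv σ)
  | assign x a φ ih => exact imp_congr (by rw [(hZ w v hwv).1.1]) (ih hwv _)
  | know Xs α ih =>
    obtain ⟨-, hzig, hzag⟩ := hZ w v hwv
    constructor
    · intro H v' hv'
      obtain ⟨w', hw', hw'v'⟩ := hzag (σ '' Xs) v' (by simpa using hv')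
      exact (ih hw'v' σ).1 (H w' (by simpa using hw'))
    · intro H w' hw'
      obtain ⟨v', hv', hw'v'⟩ := hzig (σ '' Xs) w' (by simpa using hw')
      exact (ih hw'v' σ).2 (H v' (by simpa using hv'))

theorem ksat_bigAnd (M : KModel Ag Pr) (l : List (Formula Ag Xv Pr)) (w : M.W)
    (σ : Xv → Ag) : KSat M (bigAnd l) w σ ↔ ∀ φ ∈ l, KSat M φ w σ := by
  induction l with
  | nil => simp [bigAnd, KSat]
  | cons φ l ih => simp [bigAnd, KSat, ih]

theorem Formula.Sent.bigAnd {l : List (Formula Ag Xv Pr)} (h : ∀ φ ∈ l, φ.Sent) :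
    (Formula.bigAnd l).Sent := by
  induction l with
  | nil => exact ⟨trivial, rfl⟩
  | cons φ l ih =>
    obtain ⟨hφ, hl⟩ := List.forall_mem_cons.1 h
    exact ⟨⟨hφ.1, (ih hl).1⟩, by simp [Formula.bigAnd, FV, hφ.2, (ih hl).2]⟩

theorem exists_sent_ksat_iff_forall {Δ : Set (Formula Ag Xv Pr)} (hΔ : Δ.Finite)
    (hsent : ∀ α ∈ Δ, α.Sent) :
    ∃ β : Formula Ag Xv Pr, β.Sent ∧
      ∀ (M : KModel Ag Pr) (w : M.W) (σ : Xv → Ag), KSat M β w σ ↔ ∀ α ∈ Δ, KSat M α w σ :=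
  ⟨bigAnd hΔ.toFinset.toList, Sent.bigAnd fun α hα => hsent α (by simpa using hα),
    fun M w σ => by simp [ksat_bigAnd]⟩

def updateList : (Xv → Ag) → List Xv → List Ag → Xv → Ag
  | σ, x :: xs, a :: as => updateList (Function.update σ x a) xs as
  | σ, _, _ => σ

theorem updateList_of_notMem {xs : List Xv} {x : Xv} (hx : x ∉ xs) (σ : Xv → Ag)
    (as : List Ag) : updateList σ xs as x = σ x := by
  induction xs generalizing σ as with
  | nil => cases as <;> rfl
  | cons y xs ih =>
    cases as with
    | nil => rfl
    | cons a as =>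
      obtain ⟨hxy, hxs⟩ := not_or.1 (List.mem_cons.not.1 hx)
      exact (ih hxs _ as).trans (Function.update_of_ne hxy a σ)

theorem map_updateList {xs : List Xv} {as : List Ag} (hxs : xs.Nodup)
    (hlen : xs.length = as.length) (σ : Xv → Ag) : xs.map (updateList σ xs as) = as := by
  induction xs generalizing σ as with
  | nil => cases as <;> simp_all
  | cons x xs ih =>
    cases as with
    | nil => simp at hlen
    | cons a as =>
      obtain ⟨hx, hxs⟩ := List.nodup_cons.1 hxs
      simp only [List.map_cons, updateList, updateList_of_notMem hx, Function.update_self,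
        ih hxs (Nat.succ.inj hlen)]

theorem ksat_assigns (M : KModel Ag Pr) (φ : Formula Ag Xv Pr) {xs : List Xv} {as : List Ag}
    (hlen : xs.length = as.length) (w : M.W) (σ : Xv → Ag) :
    KSat M (assigns xs as φ) w σ ↔ ((∀ a ∈ as, a ∈ M.δ w) → KSat M φ w (updateList σ xs as)) := by
  induction xs generalizing σ as with
  | nil => cases as <;> simp_all [assigns, updateList]
  | cons x xs ih =>
    cases as with
    | nil => simp at hlen
    | cons a as =>
      simp only [assigns, updateList, KSat, ih (Nat.succ.inj hlen), List.forall_mem_cons]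
      tauto

theorem fv_assigns (φ : Formula Ag Xv Pr) {xs : List Xv} {as : List Ag}
    (hlen : xs.length = as.length) : (assigns xs as φ).FV = φ.FV \ xs.toFinset := by
  induction xs generalizing as with
  | nil => cases as <;> simp_all [assigns]
  | cons x xs ih =>
    cases as with
    | nil => simp at hlen
    | cons a as =>
      ext y
      simp only [assigns, FV, ih (Nat.succ.inj hlen), List.toFinset_cons, Finset.mem_sdiff,
        Finset.mem_insert, Finset.mem_singleton, List.mem_toFinset]
      tauto

theorem wf_assigns (φ : Formula Ag Xv Pr) (xs : List Xv) (as : List Ag) :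
    (assigns xs as φ).Wf ↔ φ.Wf := by
  induction xs generalizing as with
  | nil => cases as <;> rfl
  | cons x xs ih =>
    cases as with
    | nil => rfl
    | cons a as => exact ih as

def Formula.jointPossible (xs : List Xv) (as : List Ag) (β : Formula Ag Xv Pr) :
    Formula Ag Xv Pr :=
  .neg (assigns xs as (.know xs.toFinset (.neg β)))

theorem Formula.Sent.jointPossible {xs : List Xv} {as : List Ag} (hlen : xs.length = as.length)
    {β : Formula Ag Xv Pr} (hβ : β.Sent) : (β.jointPossible xs as).Sent :=
  ⟨(wf_assigns _ xs as).2 ⟨hβ.1, hβ.2⟩, by simp [Formula.jointPossible, FV, fv_assigns _ hlen]⟩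

theorem ksat_jointPossible {M : KModel Ag Pr} (hM : ∀ a w v, M.R a w v → a ∈ M.δ w)
    {xs : List Xv} {as : List Ag} (hxs : xs.Nodup) (hlen : xs.length = as.length)
    {β : Formula Ag Xv Pr} (hβ : β.Sent) (w : M.W) (σ : Xv → Ag) :
    KSat M (β.jointPossible xs as) w σ ↔ ∃ v, (∀ a ∈ as, M.R a w v) ∧ KSat M β v σ := by
  have hagents : ∀ v, (∀ x ∈ xs.toFinset, M.R (updateList σ xs as x) w v) ↔
      ∀ a ∈ as, M.R a w v := fun v => by
    conv_rhs => rw [← map_updateList hxs hlen σ]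
    simp
  simp only [Formula.jointPossible, KSat, ksat_assigns M _ hlen, hagents,
    hβ.ksat_iff M _ (updateList σ xs as) σ]
  constructor
  · intro h
    by_contra hnone
    exact h fun _ v hv hβv => hnone ⟨v, hv, hβv⟩
  · rintro ⟨v, hv, hβv⟩ h
    exact h (fun a ha => hM a w v (hv a ha)) v hv hβv

theorem exists_sent_ksat_iff_exists [Infinite Xv] {As : Set Ag} (hAs : As.Finite)
    {β : Formula Ag Xv Pr} (hβ : β.Sent) :
    ∃ γ : Formula Ag Xv Pr, γ.Sent ∧
      ∀ (M : KModel Ag Pr), (∀ a w v, M.R a w v → a ∈ M.δ w) → ∀ (w : M.W) (σ : Xv → Ag),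
        KSat M γ w σ ↔ ∃ v, (∀ a ∈ As, M.R a w v) ∧ KSat M β v σ := by
  set as := hAs.toFinset.toList
  set xs := (List.range as.length).map (Infinite.natEmbedding Xv)
  have hlen : xs.length = as.length := by simp [xs]
  have hxs : xs.Nodup := List.nodup_range.map (Infinite.natEmbedding Xv).injective
  refine ⟨β.jointPossible xs as, hβ.jointPossible hlen, fun M hM w σ => ?_⟩
  simp [ksat_jointPossible hM hxs hlen hβ, as]

variable (Xv) in
def KEquiv (M N : KModel Ag Pr) (w : M.W) (v : N.W) : Prop :=
  ∀ α : Formula Ag Xv Pr, α.Sent → ((∀ σ, KSat M α w σ) ↔ (∀ σ, KSat N α v σ))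

namespace KEquiv

variable {M N : KModel Ag Pr} {w : M.W} {v : N.W}

theorem symm (h : KEquiv Xv M N w v) : KEquiv Xv N M v w :=
  fun α hα => (h α hα).symm

theorem ksat_iff (h : KEquiv Xv M N w v) {α : Formula Ag Xv Pr} (hα : α.Sent) (σ : Xv → Ag) :
    KSat M α w σ ↔ KSat N α v σ := by
  rw [← hα.forall_ksat_iff M w σ, ← hα.forall_ksat_iff N v σ]
  exact h α hα

/-- The theory of a world is closed under negation, so inclusion of theories is equality. -/
theorem of_forall_imp
    (h : ∀ α : Formula Ag Xv Pr, α.Sent → (∀ σ, KSat M α w σ) → ∀ σ, KSat N α v σ) :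
    KEquiv Xv M N w v := by
  refine fun α hα => ⟨h α hα, fun hv => ?_⟩
  by_contra hw
  obtain ⟨σ, hσ⟩ := not_forall.1 hw
  have hneg : ∀ τ, KSat M (.neg α) w τ := fun τ => mt (hα.ksat_iff M w τ σ).1 hσ
  exact h (.neg α) ⟨hα.1, hα.2⟩ hneg σ (hv σ)

theorem δ_eq [Nonempty Xv] (h : KEquiv Xv M N w v) : M.δ w = N.δ v := by
  ext a
  have hdia : ∀ (K : KModel Ag Pr) (u : K.W),
      KSat K (dia (Classical.arbitrary Xv) a .top) u (fun _ => a) ↔ a ∈ K.δ u := by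
    simp [dia, KSat]
  rw [← hdia M w, ← hdia N v]
  exact h.ksat_iff (α := dia _ a .top) ⟨trivial, by simp [dia, FV]⟩ _

theorem ρ_eq [Nonempty Xv] (hM : ∀ p w, M.ρ p w ⊆ M.δ w) (hN : ∀ p v, N.ρ p v ⊆ N.δ v)
    (h : KEquiv Xv M N w v) (p : Pr) : M.ρ p w = N.ρ p v := by
  ext a
  set x := Classical.arbitrary Xv
  have hdia : ∀ (K : KModel Ag Pr) (u : K.W), K.ρ p u ⊆ K.δ u →
      (KSat K (dia x a (.atom p x)) u (fun _ => a) ↔ a ∈ K.ρ p u) := by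
    intro K u hK
    simpa [dia, KSat] using fun ha => hK ha
  rw [← hdia M w (hM p w), ← hdia N v (hN p v)]
  exact h.ksat_iff (α := dia x a (.atom p x)) ⟨trivial, by simp [dia, FV]⟩ _

theorem exists_of_rel [Nonempty Ag] [Infinite Xv] (hM : ∀ a w v, M.R a w v → a ∈ M.δ w)
    (hN : ∀ a w v, N.R a w v → a ∈ N.δ w) (hNsat : KSaturated Xv N) (h : KEquiv Xv M N w v)
    {As : Set Ag} (hAs : As.Finite) {w' : M.W} (hw' : ∀ a ∈ As, M.R a w w') :
    ∃ v', (∀ a ∈ As, N.R a v v') ∧ KEquiv Xv M N w' v' := by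
  set Δ : Set (Formula Ag Xv Pr) := {α | α.Sent ∧ ∀ σ, KSat M α w' σ}
  have hfinite : ∀ Δ₀ ⊆ Δ, Δ₀.Finite →
      ∃ v', (∀ a ∈ As, N.R a v v') ∧ ∀ α ∈ Δ₀, ∀ σ, KSat N α v' σ := by
    intro Δ₀ hΔ₀ hfin
    obtain ⟨β, hβ, hβiff⟩ := exists_sent_ksat_iff_forall hfin fun α hα => (hΔ₀ hα).1
    obtain ⟨γ, hγ, hγiff⟩ := exists_sent_ksat_iff_exists hAs hβ
    let σ₀ : Xv → Ag := fun _ => Classical.arbitrary Ag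
    have hγw : KSat M γ w σ₀ :=
      (hγiff M hM w σ₀).2 ⟨w', hw', (hβiff M w' σ₀).2 fun α hα => (hΔ₀ hα).2 σ₀⟩
    obtain ⟨v', hv', hβv'⟩ := (hγiff N hN v σ₀).1 ((h.ksat_iff hγ σ₀).1 hγw)
    exact ⟨v', hv', fun α hα σ => ((hΔ₀ hα).1.ksat_iff N v' σ₀ σ).1 ((hβiff N v' σ₀).1 hβv' α hα)⟩
  obtain ⟨v', hv', hΔv'⟩ := hNsat As v Δ (fun α hα => hα.1) hfinite
  exact ⟨v', hv', of_forall_imp fun α hα hw'α => hΔv' α ⟨hα, hw'α⟩⟩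

theorem isKBisim [Nonempty Ag] [Finite Ag] [Infinite Xv] (hM : M.IsModel) (hN : N.IsModel)
    (hMsat : KSaturated Xv M) (hNsat : KSaturated Xv N) :
    IsKBisim M N {p | KEquiv Xv M N p.1 p.2} := by
  intro w v h
  refine ⟨⟨h.δ_eq, h.ρ_eq hM.2.2.2 hN.2.2.2⟩, fun As w' hw' => ?_, fun As v' hv' => ?_⟩
  · exact h.exists_of_rel hM.2.2.1 hN.2.2.1 hNsat As.toFinite hw'
  · obtain ⟨w', hw', hw'v'⟩ := h.symm.exists_of_rel hN.2.2.1 hM.2.2.1 hMsat As.toFinite hv'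
    exact ⟨w', hw', hw'v'.symm⟩

end KEquiv

end HennessyMilner

theorem hennessy_milner_kripke_general
    {Ag Xv Pr : Type} [Fintype Ag] [Nonempty Ag]
    [DecidableEq Xv] [Infinite Xv]
    (M N : KModel Ag Pr) (hM : M.IsModel) (hN : N.IsModel)
    (hMsat : KSaturated Xv M) (hNsat : KSaturated Xv N)
    (w : M.W) (v : N.W) :
    (∃ Z, IsKBisim M N Z ∧ (w, v) ∈ Z) ↔
      (∀ α : Formula Ag Xv Pr, Formula.Sent α →
        ((∀ σ : Xv → Ag, KSat M α w σ) ↔ (∀ σ : Xv → Ag, KSat N α v σ))) := by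
  constructor
  · rintro ⟨Z, hZ, hwv⟩ α -
    exact forall_congr' fun σ => ksat_iff_of_isKBisim hZ α hwv σ
  · exact fun h => ⟨_, KEquiv.isKBisim hM hN hMsat hNsat, h⟩

/-- Hennessy-Milner property for saturated first-order Kripke models. -/
theorem hennessy_milner_kripke
    {Ag Xv Pr : Type} [Fintype Ag] [Nonempty Ag] [DecidableEq Ag]
    [DecidableEq Xv] [Countable Xv] [Infinite Xv] [Countable Pr]
    (M N : KModel Ag Pr) (hM : M.IsModel) (hN : N.IsModel)
    (hMsat : KSaturated Xv M) (hNsat : KSaturated Xv N)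
    (w : M.W) (v : N.W) :
    (∃ Z, IsKBisim M N Z ∧ (w, v) ∈ Z) ↔
      (∀ α : Formula Ag Xv Pr, Formula.Sent α →
        ((∀ σ : Xv → Ag, KSat M α w σ) ↔ (∀ σ : Xv → Ag, KSat N α v σ))) :=
  hennessy_milner_kripke_general M N hM hN hMsat hNsat w v

end SimplicialEpistemic
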